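/- arXiv:1508.04696 — 4 statements merged into one kernel-verified Lean document; each statement's English description precedes it below -/
import Mathlib

section
/- For all Q, R > 0, there is a constant C₁ = C₁(Q,R) > 0 such that if V : ℝ → ℝ is continuous with ‖V‖_∞ ≤ Q, E ∈ ℂ satisfies |E| ≤ R, and u : ℝ → ℂ is a twice differentiable function satisfying -u'' + Vu = Eu, then |u'(x)|² ≤ C₁ ∫_{x-1}^{x+1} |u(t)|² dt for all x ∈ ℝ. -/
/-!
Testing `u` against the weight `t - x` on `[x - 1, x + 1]` recovers `u'(x)`: with the Taylor
remainder `r(t) = u(t) - u(x) - (t - x) u'(x)` one has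
`∫ (t - x) u(t) dt = (2/3) u'(x) + ∫ (t - x) r(t) dt`. Since `|u''| = |V - E| |u| ≤ (Q + R) |u|`,
the mean value inequality bounds the remainder by `|r(t)| ≤ (Q + R) ∫_{x-1}^{x+1} |u|`.
So `|u'(x)|` is controlled by the `L¹` norm of `u` on the interval, and Cauchy–Schwarz turns
this into the `L²` bound.
-/

open MeasureTheory Set

section

variable {F : Type*} [NormedAddCommGroup F] [NormedSpace ℝ F]

theorem norm_sub_le_integral_of_norm_deriv_le_of_mem_Icc {f : ℝ → F} {B : ℝ → ℝ} {a b x y : ℝ}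
    (hf : Differentiable ℝ f) (hB : ∀ s, ‖deriv f s‖ ≤ B s)
    (hBi : IntervalIntegrable B volume a b) (hx : x ∈ Icc a b) (hy : y ∈ Icc a b) :
    ‖f y - f x‖ ≤ ∫ s in a..b, B s := by
  wlog hxy : x ≤ y generalizing x y
  · rw [norm_sub_rev]
    exact this hy hx (le_of_not_ge hxy)
  calc ‖f y - f x‖ ≤ ∫ s in x..y, B s :=
        norm_sub_le_integral_of_norm_deriv_le_of_le hxy hf.continuous.continuousOn
          hf.differentiableOn (.of_forall fun s _ => hB s)
          (hBi.mono_set (uIcc_subset_uIcc (Icc_subset_uIcc hx) (Icc_subset_uIcc hy)))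
    _ ≤ ∫ s in a..b, B s :=
        intervalIntegral.integral_mono_interval hx.1 hxy hy.2
          (.of_forall fun s => (norm_nonneg _).trans (hB s)) hBi

theorem norm_taylor_remainder_le_integral_mul {f : ℝ → F} {B : ℝ → ℝ} {a b x t : ℝ}
    (hf : Differentiable ℝ f) (hf' : Differentiable ℝ (deriv f))
    (hB : ∀ s, ‖deriv (deriv f) s‖ ≤ B s) (hBi : IntervalIntegrable B volume a b)
    (hx : x ∈ Icc a b) (ht : t ∈ Icc a b) :
    ‖f t - f x - (t - x) • deriv f x‖ ≤ (∫ s in a..b, B s) * |t - x| := by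
  set g : ℝ → F := fun s => f s - (s - x) • deriv f x
  have hg (s : ℝ) : HasDerivAt g (deriv f s - deriv f x) s :=
    ((hf s).hasDerivAt.sub (((hasDerivAt_id s).sub_const x).smul_const _)).congr_deriv
      (by simp)
  have hmvt := (convex_Icc a b).norm_image_sub_le_of_norm_deriv_le (fun s _ => (hg s).differentiableAt)
    (fun s hs => (hg s).deriv ▸ norm_sub_le_integral_of_norm_deriv_le_of_mem_Icc hf' hB hBi hx hs)
    hx ht
  rw [← Real.norm_eq_abs]
  convert hmvt using 2
  simp only [g, sub_self, zero_smul, sub_zero]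
  abel

theorem norm_integral_sub_smul_sub_smul_deriv_le [CompleteSpace F] {f : ℝ → F} {B : ℝ → ℝ} {x : ℝ}
    (hf : Differentiable ℝ f) (hf' : Differentiable ℝ (deriv f))
    (hB : ∀ s, ‖deriv (deriv f) s‖ ≤ B s) (hBi : IntervalIntegrable B volume (x - 1) (x + 1)) :
    ‖(∫ t in x - 1..x + 1, (t - x) • f t) - (2 / 3 : ℝ) • deriv f x‖
      ≤ 2 * ∫ s in x - 1..x + 1, B s := by
  have hx : x ∈ Icc (x - 1) (x + 1) := ⟨by linarith, by linarith⟩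
  have hfc := hf.continuous
  have hmoment₁ : ∫ t in x - 1..x + 1, (t - x) = 0 := by
    rw [intervalIntegral.integral_comp_sub_right (fun t => t)]; norm_num [integral_id]
  have hmoment₂ : ∫ t in x - 1..x + 1, (t - x) ^ 2 = 2 / 3 := by
    rw [intervalIntegral.integral_comp_sub_right (fun t => t ^ 2)]; norm_num [integral_pow]
  have hremainder :
      (∫ t in x - 1..x + 1, (t - x) • f t) - (2 / 3 : ℝ) • deriv f x
        = ∫ t in x - 1..x + 1, (t - x) • (f t - f x - (t - x) • deriv f x) := by
    simp only [smul_sub, smul_smul, ← sq]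
    rw [intervalIntegral.integral_sub, intervalIntegral.integral_sub,
      intervalIntegral.integral_smul_const, intervalIntegral.integral_smul_const, hmoment₁,
      hmoment₂]
    · simp
    all_goals exact Continuous.intervalIntegrable (by fun_prop) _ _
  rw [hremainder]
  have hbound (t : ℝ) (ht : t ∈ uIoc (x - 1) (x + 1)) :
      ‖(t - x) • (f t - f x - (t - x) • deriv f x)‖ ≤ ∫ s in x - 1..x + 1, B s := by
    have ht' : t ∈ Icc (x - 1) (x + 1) := by
      rw [← uIcc_of_le (by linarith : x - 1 ≤ x + 1)]; exact uIoc_subset_uIcc ht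
    have htx : |t - x| ≤ 1 := by rw [abs_sub_comm]; exact mem_Icc_iff_abs_le.2 ht'
    have hB₀ : 0 ≤ ∫ s in x - 1..x + 1, B s :=
      intervalIntegral.integral_nonneg (by linarith) fun s _ => (norm_nonneg _).trans (hB s)
    rw [norm_smul, Real.norm_eq_abs]
    calc |t - x| * ‖f t - f x - (t - x) • deriv f x‖
        ≤ |t - x| * ((∫ s in x - 1..x + 1, B s) * |t - x|) := by
          gcongr; exact norm_taylor_remainder_le_integral_mul hf hf' hB hBi hx ht'
      _ ≤ 1 * ((∫ s in x - 1..x + 1, B s) * 1) := by gcongr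
      _ = ∫ s in x - 1..x + 1, B s := by ring
  calc _ ≤ (∫ s in x - 1..x + 1, B s) * |x + 1 - (x - 1)| :=
        intervalIntegral.norm_integral_le_of_norm_le_const hbound
    _ = 2 * ∫ s in x - 1..x + 1, B s := by
        rw [show x + 1 - (x - 1) = 2 by ring, abs_two, mul_comm]

theorem norm_deriv_le_of_norm_deriv_deriv_le [CompleteSpace F] {f : ℝ → F} {K : ℝ} (x : ℝ)
    (hf : Differentiable ℝ f) (hf' : Differentiable ℝ (deriv f))
    (hfK : ∀ s, ‖deriv (deriv f) s‖ ≤ K * ‖f s‖) :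
    ‖deriv f x‖ ≤ 3 / 2 * (1 + 2 * K) * ∫ t in x - 1..x + 1, ‖f t‖ := by
  have hfi : IntervalIntegrable (fun t => ‖f t‖) volume (x - 1) (x + 1) :=
    hf.continuous.norm.intervalIntegrable _ _
  have hremainder := norm_integral_sub_smul_sub_smul_deriv_le hf hf' hfK (hfi.const_mul K)
  rw [intervalIntegral.integral_const_mul] at hremainder
  have hmoment : ‖∫ t in x - 1..x + 1, (t - x) • f t‖ ≤ ∫ t in x - 1..x + 1, ‖f t‖ := by
    refine intervalIntegral.norm_integral_le_of_norm_le (by linarith)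
      (.of_forall fun t ht => ?_) hfi
    have htx : ‖t - x‖ ≤ 1 := by
      rw [Real.norm_eq_abs, abs_le]; constructor <;> linarith [ht.1, ht.2]
    rw [norm_smul]
    exact mul_le_of_le_one_left (norm_nonneg _) htx
  have htriangle :=
    norm_sub_norm_le ((2 / 3 : ℝ) • deriv f x) (∫ t in x - 1..x + 1, (t - x) • f t)
  rw [norm_sub_rev, norm_smul, Real.norm_of_nonneg (by norm_num)] at htriangle
  linarith

end

theorem sq_integral_le_mul_integral_sq {f : ℝ → ℝ} {a b : ℝ} (hab : a ≤ b)
    (hf : IntervalIntegrable f volume a b)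
    (hf₂ : IntervalIntegrable (fun t => f t ^ 2) volume a b) :
    (∫ t in a..b, f t) ^ 2 ≤ (b - a) * ∫ t in a..b, f t ^ 2 := by
  set S := ∫ t in a..b, f t
  have hexpand : ∫ t in a..b, ((b - a) * f t - S) ^ 2
      = (b - a) * ((b - a) * (∫ t in a..b, f t ^ 2) - S ^ 2) := by
    have hsq (t : ℝ) : ((b - a) * f t - S) ^ 2
        = (b - a) ^ 2 * f t ^ 2 - 2 * (b - a) * S * f t + S ^ 2 := by
      ring
    simp only [hsq]
    rw [intervalIntegral.integral_add ((hf₂.const_mul _).sub (hf.const_mul _))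
        intervalIntegrable_const,
      intervalIntegral.integral_sub (hf₂.const_mul _) (hf.const_mul _),
      intervalIntegral.integral_const_mul, intervalIntegral.integral_const_mul,
      intervalIntegral.integral_const, smul_eq_mul]
    ring
  have hvariance : 0 ≤ ∫ t in a..b, ((b - a) * f t - S) ^ 2 :=
    intervalIntegral.integral_nonneg hab fun _ _ => sq_nonneg _
  rcases hab.eq_or_lt with rfl | hlt
  · simp [S]
  · rw [hexpand] at hvariance
    nlinarith

/-- For all `Q, R > 0` there is `C₁ = C₁(Q,R) > 0` such that: if `V` is
continuous with `‖V‖_∞ ≤ Q`, `|E| ≤ R`, and `u` is twice differentiable with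
`-u'' + Vu = Eu` pointwise, then `|u'(x)|² ≤ C₁ ∫_{x-1}^{x+1} |u(t)|² dt` for all `x`. -/
theorem solution_derivative_estimate (Q R : ℝ) (hQ : 0 < Q) (hR : 0 < R) :
    ∃ C₁ : ℝ, 0 < C₁ ∧
      ∀ V : ℝ → ℝ, Continuous V → (∀ x : ℝ, |V x| ≤ Q) →
      ∀ E : ℂ, ‖E‖ ≤ R →
      ∀ u : ℝ → ℂ, Differentiable ℝ u → Differentiable ℝ (deriv u) →
        (∀ x : ℝ, -deriv (deriv u) x + (V x : ℂ) * u x = E * u x) →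
        ∀ x : ℝ, ‖deriv u x‖ ^ 2 ≤ C₁ * ∫ t in (x - 1)..(x + 1), ‖u t‖ ^ 2 := by
  set C := 3 / 2 * (1 + 2 * (Q + R))
  refine ⟨2 * C ^ 2, by positivity, fun V _ hVQ E hE u hu hu' hODE x => ?_⟩
  have hu'' (s : ℝ) : ‖deriv (deriv u) s‖ ≤ (Q + R) * ‖u s‖ := by
    rw [show deriv (deriv u) s = ((V s : ℂ) - E) * u s by linear_combination -hODE s, norm_mul]
    gcongr
    calc ‖(V s : ℂ) - E‖ ≤ ‖(V s : ℂ)‖ + ‖E‖ := norm_sub_le _ _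
      _ ≤ Q + R := add_le_add (by simpa [Complex.norm_real] using hVQ s) hE
  have hCS := sq_integral_le_mul_integral_sq (show x - 1 ≤ x + 1 by linarith)
    (hu.continuous.norm.intervalIntegrable _ _) ((hu.continuous.norm.pow 2).intervalIntegrable _ _)
  calc ‖deriv u x‖ ^ 2 ≤ (C * ∫ t in x - 1..x + 1, ‖u t‖) ^ 2 := by
        gcongr; exact norm_deriv_le_of_norm_deriv_deriv_le x hu hu' hu''
    _ = C ^ 2 * (∫ t in x - 1..x + 1, ‖u t‖) ^ 2 := by ring
    _ ≤ C ^ 2 * ((x + 1 - (x - 1)) * ∫ t in x - 1..x + 1, ‖u t‖ ^ 2) := by gcongr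
    _ = 2 * C ^ 2 * ∫ t in x - 1..x + 1, ‖u t‖ ^ 2 := by ring
end

section
/- Let 𝒢 ⊆ LP denote the set of Gordon potentials in LP. Then 𝒢 = ⋂_{N ≥ 1} ⋃_{n ≥ N} ⋃_{m ≥ N} 𝒪_{n,m}, where 𝒪_{n,m} = { V ∈ LP : ∃ T ∈ (n-1, n+1) with max_{|x| ≤ T} |V(x) - V(x+T)| < m^{-T} }; in particular 𝒢 is a dense Gδ subset of LP. -/
open MeasureTheory Filter Set BoundedContinuousFunction
open scoped ENNReal

noncomputable section
/-- The space of (uniformly) limit-periodic functions on `ℝ`: uniform limits of continuous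
periodic functions, viewed inside the bounded continuous functions with the sup norm. -/
def LP : Set (ℝ →ᵇ ℝ) :=
  closure {f : ℝ →ᵇ ℝ | ∃ T : ℝ, 0 < T ∧ Function.Periodic (⇑f) T}
/-- `max_{|x| ≤ T} |W(x) - W(x+T)|`, expressed as a supremum over the interval `[-T, T]`. -/
def gordonSup (W : ℝ → ℝ) (T : ℝ) : ℝ :=
  ⨆ x : Set.Icc (-T) T, |W x - W (↑x + T)|

/-- `W` is a Gordon potential: there are `Tₖ → ∞` with
`Cᵀᵏ · max_{|x| ≤ Tₖ} |W(x) - W(x+Tₖ)| → 0` for every `C > 0`. -/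
def IsGordon (W : ℝ → ℝ) : Prop :=
  ∃ T : ℕ → ℝ, Tendsto T atTop atTop ∧
    ∀ C : ℝ, 0 < C →
      Tendsto (fun k => C ^ (T k) * gordonSup W (T k)) atTop (nhds 0)

/-- The set `𝒪_{n,m}` of limit-periodic `V` admitting `T ∈ (n-1, n+1)` with
`max_{|x| ≤ T} |V(x) - V(x+T)| < m^{-T}`. -/
def gordonOpen (n m : ℕ) : Set ↥LP :=
  {V : ↥LP | ∃ T ∈ Set.Ioo ((n : ℝ) - 1) ((n : ℝ) + 1),
    gordonSup (fun x => (V : ℝ →ᵇ ℝ) x) T < (m : ℝ) ^ (-T)}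

lemma gordonSup_nonneg (W : ℝ → ℝ) (T : ℝ) : 0 ≤ gordonSup W T :=
  Real.iSup_nonneg fun _ => abs_nonneg _

lemma bddAbove_gordonRange (V : ℝ →ᵇ ℝ) (T : ℝ) :
    BddAbove (Set.range fun x : Set.Icc (-T) T => |V ↑x - V (↑x + T)|) := by
  refine ⟨2 * ‖V‖, ?_⟩
  rintro y ⟨x, rfl⟩
  have h1 : |V ↑x| ≤ ‖V‖ := by
    simpa [Real.norm_eq_abs] using V.norm_coe_le_norm ↑x
  have h2 : |V (↑x + T)| ≤ ‖V‖ := by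
    simpa [Real.norm_eq_abs] using V.norm_coe_le_norm (↑x + T)
  have h3 : |V ↑x - V (↑x + T)| ≤ |V ↑x| + |V (↑x + T)| := abs_sub _ _
  linarith

lemma abs_le_gordonSup (V : ℝ →ᵇ ℝ) {T x : ℝ} (hx : x ∈ Set.Icc (-T) T) :
    |V x - V (x + T)| ≤ gordonSup (fun y => V y) T :=
  le_ciSup (bddAbove_gordonRange V T) (⟨x, hx⟩ : Set.Icc (-T) T)

lemma gordonSup_le_add (V W : ℝ →ᵇ ℝ) {T : ℝ} (hT : 0 ≤ T) :
    gordonSup (fun y => W y) T ≤ gordonSup (fun y => V y) T + 2 * dist W V := by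
  have hne : Nonempty (Set.Icc (-T) T) := (Set.nonempty_Icc.2 (by linarith)).to_subtype
  refine ciSup_le fun x => ?_
  have hd1 : |W ↑x - V ↑x| ≤ dist W V := by
    simpa [Real.dist_eq] using dist_coe_le_dist (f := W) (g := V) (↑x : ℝ)
  have hd2 : |W (↑x + T) - V (↑x + T)| ≤ dist W V := by
    simpa [Real.dist_eq] using dist_coe_le_dist (f := W) (g := V) ((↑x : ℝ) + T)
  have hV : |V ↑x - V (↑x + T)| ≤ gordonSup (fun y => V y) T := abs_le_gordonSup V x.2
  have key : |W ↑x - W (↑x + T)| ≤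
      |V ↑x - V (↑x + T)| + (|W ↑x - V ↑x| + |W (↑x + T) - V (↑x + T)|) := by
    have h3 : |V (↑x + T) - W (↑x + T)| = |W (↑x + T) - V (↑x + T)| := abs_sub_comm _ _
    have h1 := abs_add_le (V ↑x - V (↑x + T) + (W ↑x - V ↑x)) (V (↑x + T) - W (↑x + T))
    rw [h3] at h1
    have h2 := abs_add_le (V ↑x - V (↑x + T)) (W ↑x - V ↑x)
    calc |W ↑x - W (↑x + T)|
        = |V ↑x - V (↑x + T) + (W ↑x - V ↑x) + (V (↑x + T) - W (↑x + T))| := by ring_nf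
      _ ≤ _ := by linarith
  linarith

lemma isOpen_gordonOpen {n : ℕ} (m : ℕ) (hn : 1 ≤ n) : IsOpen (gordonOpen n m) := by
  rw [Metric.isOpen_iff]
  rintro V ⟨T, hT, hg⟩
  have hT0 : (0:ℝ) ≤ T := by
    have : (1:ℝ) ≤ (n:ℝ) := by exact_mod_cast hn
    have := hT.1; linarith
  refine ⟨((m:ℝ) ^ (-T) - gordonSup (fun x => (V : ℝ →ᵇ ℝ) x) T) / 3, by linarith, ?_⟩
  intro W hW
  rw [Metric.mem_ball] at hW
  refine ⟨T, hT, ?_⟩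
  have hdist : dist (W : ℝ →ᵇ ℝ) (V : ℝ →ᵇ ℝ) = dist W V := (Subtype.dist_eq W V).symm
  have := gordonSup_le_add (V := (V : ℝ →ᵇ ℝ)) (W := (W : ℝ →ᵇ ℝ)) hT0
  rw [hdist] at this
  calc gordonSup (fun x => (W : ℝ →ᵇ ℝ) x) T
      ≤ gordonSup (fun x => (V : ℝ →ᵇ ℝ) x) T + 2 * dist W V := this
    _ < (m:ℝ) ^ (-T) := by linarith

/-- The set `𝒢` of Gordon potentials in `LP` equals
`⋂_{N ≥ 1} ⋃_{n ≥ N} ⋃_{m ≥ N} 𝒪_{n,m}`; in particular `𝒢` is a dense `Gδ` subset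
of `LP`. -/
theorem gordon_set_eq_iInter_iUnion_and_dense_Gδ :
    {V : ↥LP | IsGordon fun x => (V : ℝ →ᵇ ℝ) x} =
      (⋂ N ≥ 1, ⋃ n ≥ N, ⋃ m ≥ N, gordonOpen n m) ∧
    Dense {V : ↥LP | IsGordon fun x => (V : ℝ →ᵇ ℝ) x} ∧
    IsGδ {V : ↥LP | IsGordon fun x => (V : ℝ →ᵇ ℝ) x} := by
  have heq : {V : ↥LP | IsGordon fun x => (V : ℝ →ᵇ ℝ) x} =
      (⋂ N ≥ 1, ⋃ n ≥ N, ⋃ m ≥ N, gordonOpen n m) := by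
    ext V
    simp only [Set.mem_setOf_eq, Set.mem_iInter, Set.mem_iUnion]
    constructor
    · rintro ⟨T, hTtop, hC⟩ N hN
      have hN1 : (1:ℝ) ≤ (N:ℝ) := by exact_mod_cast hN
      have hC' := hC N (by linarith)
      have h1 : ∀ᶠ k in atTop, (N:ℝ) ≤ T k := hTtop.eventually_ge_atTop _
      have h2 : ∀ᶠ k in atTop,
          (N:ℝ) ^ (T k) * gordonSup (fun x => (V : ℝ →ᵇ ℝ) x) (T k) < 1 := by
        have := hC'.eventually (gt_mem_nhds (show (0:ℝ) < 1 by norm_num))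
        filter_upwards [this] with k hk using hk
      obtain ⟨k, hk1, hk2⟩ := (h1.and h2).exists
      set Tk := T k with hTk
      have hTkN : (N:ℝ) ≤ Tk := hk1
      have hTk0 : (0:ℝ) ≤ Tk := by linarith
      refine ⟨⌈Tk⌉₊, ?_, N, le_refl N, ?_⟩
      · calc N = ⌈(N:ℝ)⌉₊ := (Nat.ceil_natCast N).symm
          _ ≤ ⌈Tk⌉₊ := Nat.ceil_le_ceil hTkN
      · refine ⟨Tk, ⟨?_, ?_⟩, ?_⟩
        · have := Nat.ceil_lt_add_one hTk0
          linarith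
        · have := Nat.le_ceil Tk
          linarith
        · have hNpos : (0:ℝ) < (N:ℝ) := by linarith
          have hpow : (0:ℝ) < (N:ℝ) ^ Tk := Real.rpow_pos_of_pos hNpos _
          rw [Real.rpow_neg hNpos.le, ← one_div, lt_div_iff₀ hpow]
          linarith [hk2]
    · intro hV
      have key : ∀ N : ℕ, ∃ T : ℝ, (N:ℝ) ≤ T ∧
          gordonSup (fun x => (V : ℝ →ᵇ ℝ) x) T < ((N:ℝ) + 1) ^ (-T) := by
        intro N
        obtain ⟨n, hn, m, hm, T, hT, hg⟩ := hV (N + 1) (Nat.le_add_left 1 N)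
        have hnR : (N:ℝ) + 1 ≤ (n:ℝ) := by exact_mod_cast hn
        have hmR : (N:ℝ) + 1 ≤ (m:ℝ) := by exact_mod_cast hm
        have hTN : (N:ℝ) ≤ T := by have := hT.1; linarith
        have hT0 : (0:ℝ) ≤ T := le_trans (Nat.cast_nonneg N) hTN
        refine ⟨T, hTN, lt_of_lt_of_le hg ?_⟩
        have hbase : ((N:ℝ) + 1) ^ T ≤ (m:ℝ) ^ T :=
          Real.rpow_le_rpow (by positivity) hmR hT0
        have hp1 : (0:ℝ) < ((N:ℝ) + 1) ^ T := Real.rpow_pos_of_pos (by positivity) _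
        rw [Real.rpow_neg (by positivity), Real.rpow_neg (by positivity)]
        exact inv_anti₀ hp1 hbase
      choose f hf1 hf2 using key
      refine ⟨f, ?_, ?_⟩
      · exact tendsto_atTop_mono hf1 tendsto_natCast_atTop_atTop
      · intro C hC
        have hub : ∀ᶠ k in atTop,
            C ^ (f k) * gordonSup (fun x => (V : ℝ →ᵇ ℝ) x) (f k) ≤ (1/2:ℝ) ^ (k:ℝ) := by
          have hev : ∀ᶠ k : ℕ in atTop, 2 * C ≤ (k:ℝ) + 1 := by
            have := tendsto_natCast_atTop_atTop (R := ℝ)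
            filter_upwards [this.eventually_ge_atTop (2 * C)] with k hk
            linarith
          filter_upwards [hev] with k hk
          have hk0 : (0:ℝ) ≤ f k := le_trans (Nat.cast_nonneg k) (hf1 k)
          have hkp : (0:ℝ) < (k:ℝ) + 1 := by positivity
          have hCpow : (0:ℝ) < C ^ (f k) := Real.rpow_pos_of_pos hC _
          have step1 : C ^ (f k) * gordonSup (fun x => (V : ℝ →ᵇ ℝ) x) (f k)
              ≤ C ^ (f k) * ((k:ℝ) + 1) ^ (-(f k)) :=
            mul_le_mul_of_nonneg_left (hf2 k).le hCpow.le
          have step2 : C ^ (f k) * ((k:ℝ) + 1) ^ (-(f k)) = (C / ((k:ℝ) + 1)) ^ (f k) := by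
            rw [Real.div_rpow hC.le hkp.le, Real.rpow_neg hkp.le, div_eq_mul_inv]
          have step3 : (C / ((k:ℝ) + 1)) ^ (f k) ≤ (1/2:ℝ) ^ (f k) := by
            apply Real.rpow_le_rpow (by positivity) _ hk0
            rw [div_le_div_iff₀ hkp (by norm_num)]
            linarith
          have step4 : (1/2:ℝ) ^ (f k) ≤ (1/2:ℝ) ^ (k:ℝ) :=
            Real.rpow_le_rpow_of_exponent_ge (by norm_num) (by norm_num) (hf1 k)
          calc C ^ (f k) * gordonSup (fun x => (V : ℝ →ᵇ ℝ) x) (f k)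
              ≤ (C / ((k:ℝ) + 1)) ^ (f k) := by rw [← step2]; exact step1
            _ ≤ (1/2:ℝ) ^ (f k) := step3
            _ ≤ (1/2:ℝ) ^ (k:ℝ) := step4
        have hlb : ∀ᶠ k in atTop,
            (0:ℝ) ≤ C ^ (f k) * gordonSup (fun x => (V : ℝ →ᵇ ℝ) x) (f k) := by
          filter_upwards with k
          exact mul_nonneg (Real.rpow_pos_of_pos hC _).le (gordonSup_nonneg _ _)
        have hconv : Tendsto (fun k : ℕ => (1/2:ℝ) ^ (k:ℝ)) atTop (nhds 0) := by
          have : (fun k : ℕ => (1/2:ℝ) ^ (k:ℝ)) = fun k : ℕ => (1/2:ℝ) ^ k := by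
            funext k; rw [Real.rpow_natCast]
          rw [this]
          exact tendsto_pow_atTop_nhds_zero_of_lt_one (by norm_num) (by norm_num)
        exact squeeze_zero' hlb hub hconv
  refine ⟨heq, ?_, ?_⟩
  · -- density
    have hsub : {V : ↥LP | ∃ T : ℝ, 0 < T ∧ Function.Periodic (⇑(V : ℝ →ᵇ ℝ)) T}
        ⊆ {V : ↥LP | IsGordon fun x => (V : ℝ →ᵇ ℝ) x} := by
      rintro V ⟨T, hT, hper⟩
      refine ⟨fun k => ((k:ℝ) + 1) * T, ?_, ?_⟩
      · have h1 : Tendsto (fun k : ℕ => (k:ℝ) + 1) atTop atTop :=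
          tendsto_atTop_add_const_right atTop 1 (tendsto_natCast_atTop_atTop (R := ℝ))
        exact h1.atTop_mul_const hT
      · intro C hC
        have hzero : ∀ k : ℕ, gordonSup (fun x => (V : ℝ →ᵇ ℝ) x) (((k:ℝ) + 1) * T) = 0 := by
          intro k
          have hper' : Function.Periodic (⇑(V : ℝ →ᵇ ℝ)) (((k:ℝ) + 1) * T) := by
            have := hper.nat_mul (k + 1)
            simpa [Nat.cast_add, Nat.cast_one] using this
          have hpos : (0:ℝ) < ((k:ℝ) + 1) * T := by positivity
          have hne : Nonempty (Set.Icc (-(((k:ℝ) + 1) * T)) (((k:ℝ) + 1) * T)) :=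
            (Set.nonempty_Icc.2 (by linarith)).to_subtype
          refine le_antisymm (ciSup_le fun x => ?_) (gordonSup_nonneg _ _)
          simp [hper' ↑x]
        simp only [hzero, mul_zero]
        exact tendsto_const_nhds
    apply Dense.mono hsub
    intro x
    have hx : (x : ℝ →ᵇ ℝ) ∈ closure
        ((fun V : ↥LP => (V : ℝ →ᵇ ℝ)) ''
          {V : ↥LP | ∃ T : ℝ, 0 < T ∧ Function.Periodic (⇑(V : ℝ →ᵇ ℝ)) T}) := by
      have himg : {f : ℝ →ᵇ ℝ | ∃ T : ℝ, 0 < T ∧ Function.Periodic (⇑f) T} ⊆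
          (fun V : ↥LP => (V : ℝ →ᵇ ℝ)) ''
            {V : ↥LP | ∃ T : ℝ, 0 < T ∧ Function.Periodic (⇑(V : ℝ →ᵇ ℝ)) T} := by
        intro f hf
        exact ⟨⟨f, subset_closure hf⟩, hf, rfl⟩
      exact closure_mono himg x.2
    rw [mem_closure_iff_seq_limit] at hx ⊢
    obtain ⟨u, hu1, hu2⟩ := hx
    choose g hg1 hg2 using hu1
    refine ⟨g, hg1, ?_⟩
    rw [tendsto_subtype_rng]
    have heq2 : (fun n : ℕ => ((g n : ℝ →ᵇ ℝ))) = u := funext fun n => hg2 n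
    exact heq2 ▸ hu2
  · -- Gδ
    rw [heq]
    refine IsGδ.biInter (Set.to_countable _) fun N hN => ?_
    apply IsOpen.isGδ
    apply isOpen_biUnion
    intro n hn
    apply isOpen_biUnion
    intro m hm
    exact isOpen_gordonOpen m (le_trans hN hn)
end
end

section
/- Let R, δ > 0, Λ > 1, λ ∈ [Λ^{-1}, Λ], and let V ∈ LP satisfy Leb(σ(H_{λV}) ∩ [-R,R]) < δ. Then there exist τ > 0 and r > 0 such that Leb(σ(H_{λ'V'}) ∩ [-R,R]) < δ whenever λ' ∈ [Λ^{-1}, Λ] with |λ - λ'| < τ and V' ∈ LP with ‖V - V'‖_∞ < r. -/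
open MeasureTheory Filter Set BoundedContinuousFunction
open scoped ENNReal

noncomputable section
/-- The spectrum of the Schrödinger operator `H_V φ = -φ'' + Vφ` on `L²(ℝ)`, characterized
via Weyl sequences drawn from the core `C_c²(ℝ)` of the (essentially self-adjoint) operator:
`E ∈ σ(H_V)` iff there are compactly supported `C²` functions `u` of unit `L²` norm with
`‖(H_V - E)u‖_{L²}` arbitrarily small. -/
def schrodingerSpectrum (V : ℝ → ℝ) : Set ℝ :=
  {E : ℝ | ∀ ε : ℝ, 0 < ε → ∃ u : ℝ → ℂ,
    ContDiff ℝ 2 u ∧ HasCompactSupport u ∧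
    (∫ x : ℝ, ‖u x‖ ^ 2) = 1 ∧
    (∫ x : ℝ, ‖-deriv (deriv u) x + (V x : ℂ) * u x - (E : ℂ) * u x‖ ^ 2) < ε}
/-!
The `η`-pseudospectrum `A(W, η)` (energies `E` with `inf ‖(H_W - E)u‖ ≤ η` over unit
`u ∈ C_c²`) is closed, decreases to `σ(H_W)` as `η ↓ 0`, and contains `σ(H_{W'})` whenever
`‖W - W'‖_∞ ≤ η`, by the triangle inequality in `L²`. Continuity of measure from above gives
an `η > 0` with `Leb(A(W, η) ∩ [-R, R]) < δ`, so the spectral measure bound persists on the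
`η`-ball around `W`; the theorem follows by continuity of `(λ, V) ↦ λV`.
-/

open Topology

section L2Norm

variable {α : Type*} [MeasureSpace α]

def l2Norm (f : α → ℂ) : ℝ := √(∫ x, ‖f x‖ ^ 2)

lemma l2Norm_nonneg (f : α → ℂ) : 0 ≤ l2Norm f := Real.sqrt_nonneg _

lemma eLpNorm_two_eq_ofReal_l2Norm {f : α → ℂ} (hf : MemLp f 2) :
    eLpNorm f 2 volume = ENNReal.ofReal (l2Norm f) := by
  rw [hf.eLpNorm_eq_integral_rpow_norm two_ne_zero ENNReal.ofNat_ne_top, l2Norm,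
    Real.sqrt_eq_rpow]
  norm_num

lemma l2Norm_add_le {f g : α → ℂ} (hf : MemLp f 2) (hg : MemLp g 2) :
    l2Norm (f + g) ≤ l2Norm f + l2Norm g := by
  have h := eLpNorm_add_le hf.aestronglyMeasurable hg.aestronglyMeasurable one_le_two
  rw [eLpNorm_two_eq_ofReal_l2Norm (hf.add hg), eLpNorm_two_eq_ofReal_l2Norm hf,
    eLpNorm_two_eq_ofReal_l2Norm hg, ← ENNReal.ofReal_add (l2Norm_nonneg f) (l2Norm_nonneg g)] at h
  exact (ENNReal.ofReal_le_ofReal_iff (add_nonneg (l2Norm_nonneg f) (l2Norm_nonneg g))).mp h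

lemma l2Norm_ofReal_mul_le {u : α → ℂ} (hu : ∫ x, ‖u x‖ ^ 2 = 1) {c : α → ℝ} {M : ℝ}
    (hM : 0 ≤ M) (hc : ∀ x, |c x| ≤ M) : l2Norm (fun x => (c x : ℂ) * u x) ≤ M := by
  have hint : Integrable (fun x => M ^ 2 * ‖u x‖ ^ 2) :=
    (Integrable.of_integral_ne_zero (hu ▸ one_ne_zero)).const_mul _
  have hle : ∫ x, ‖(c x : ℂ) * u x‖ ^ 2 ≤ ∫ x, M ^ 2 * ‖u x‖ ^ 2 := by
    refine integral_mono_of_nonneg (.of_forall fun x => by positivity) hint (.of_forall fun x => ?_)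
    dsimp only
    rw [norm_mul, Complex.norm_real, Real.norm_eq_abs, mul_pow]
    gcongr
    exact hc x
  rw [integral_const_mul, hu, mul_one] at hle
  calc l2Norm (fun x => (c x : ℂ) * u x) ≤ √(M ^ 2) := Real.sqrt_le_sqrt hle
    _ = M := Real.sqrt_sq hM

end L2Norm

section Residual

def schrodingerResidual (W : ℝ → ℝ) (E : ℝ) (u : ℝ → ℂ) : ℝ → ℂ :=
  fun x => -deriv (deriv u) x + (W x : ℂ) * u x - (E : ℂ) * u x

variable {W W' : ℝ → ℝ} {E E' : ℝ} {u : ℝ → ℂ}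

lemma memLp_schrodingerResidual (hW : Continuous W) (hu : ContDiff ℝ 2 u)
    (hus : HasCompactSupport u) : MemLp (schrodingerResidual W E u) 2 := by
  have hu'' : Continuous (deriv (deriv u)) := by
    rw [show (2 : WithTop ℕ∞) = 1 + 1 by norm_num] at hu
    exact (contDiff_succ_iff_deriv.mp hu).2.2.continuous_deriv le_rfl
  have hcont : Continuous (schrodingerResidual W E u) :=
    (hu''.neg.add ((Complex.continuous_ofReal.comp hW).mul hu.continuous)).sub
      (continuous_const.mul hu.continuous)
  have hsupp : HasCompactSupport (schrodingerResidual W E u) :=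
    ((hus.deriv.deriv.neg).add hus.mul_left).sub hus.mul_left
  exact hcont.memLp_of_hasCompactSupport hsupp

lemma schrodingerResidual_eq_add (W W' : ℝ → ℝ) (E E' : ℝ) (u : ℝ → ℂ) :
    schrodingerResidual W E u =
      schrodingerResidual W' E' u + fun x => (((W x - E) - (W' x - E') : ℝ) : ℂ) * u x := by
  ext x
  simp only [schrodingerResidual, Pi.add_apply]
  push_cast
  ring

lemma l2Norm_schrodingerResidual_le (hW : Continuous W) (hW' : Continuous W')
    (hu : ContDiff ℝ 2 u) (hus : HasCompactSupport u) (hu1 : ∫ x, ‖u x‖ ^ 2 = 1) {M : ℝ}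
    (hM : ∀ x, |(W x - E) - (W' x - E')| ≤ M) :
    l2Norm (schrodingerResidual W E u) ≤ l2Norm (schrodingerResidual W' E' u) + M := by
  have hdiff : MemLp (fun x => (((W x - E) - (W' x - E') : ℝ) : ℂ) * u x) 2 :=
    (((Complex.continuous_ofReal.comp ((hW.sub continuous_const).sub
      (hW'.sub continuous_const))).mul hu.continuous)).memLp_of_hasCompactSupport hus.mul_left
  rw [schrodingerResidual_eq_add W W' E E' u]
  exact (l2Norm_add_le (memLp_schrodingerResidual hW' hu hus) hdiff).trans
    (add_le_add_right (l2Norm_ofReal_mul_le hu1 ((abs_nonneg _).trans (hM 0)) hM) _)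

end Residual

section Pseudospectrum

def schrodingerPseudospectrum (W : ℝ → ℝ) (η : ℝ) : Set ℝ :=
  {E : ℝ | ∀ ε : ℝ, 0 < ε → ∃ u : ℝ → ℂ, ContDiff ℝ 2 u ∧ HasCompactSupport u ∧
    (∫ x : ℝ, ‖u x‖ ^ 2) = 1 ∧ l2Norm (schrodingerResidual W E u) < η + ε}

variable {W W' : ℝ → ℝ}

lemma schrodingerPseudospectrum_mono (W : ℝ → ℝ) {η₁ η₂ : ℝ} (h : η₁ ≤ η₂) :
    schrodingerPseudospectrum W η₁ ⊆ schrodingerPseudospectrum W η₂ := by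
  intro E hE ε hε
  obtain ⟨u, hu, hus, hu1, hres⟩ := hE ε hε
  exact ⟨u, hu, hus, hu1, hres.trans_le (by linarith)⟩

lemma mem_schrodingerPseudospectrum_of_abs_sub_le (hW : Continuous W) (hW' : Continuous W')
    {E E' η M : ℝ} (hM : ∀ x, |(W x - E) - (W' x - E')| ≤ M)
    (hE' : E' ∈ schrodingerPseudospectrum W' η) : E ∈ schrodingerPseudospectrum W (η + M) := by
  intro ε hε
  obtain ⟨u, hu, hus, hu1, hres⟩ := hE' ε hε
  refine ⟨u, hu, hus, hu1, ?_⟩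
  linarith [l2Norm_schrodingerResidual_le hW hW' hu hus hu1 hM]

lemma schrodingerSpectrum_subset_pseudospectrum_zero (W : ℝ → ℝ) :
    schrodingerSpectrum W ⊆ schrodingerPseudospectrum W 0 := by
  intro E hE ε hε
  obtain ⟨u, hu, hus, hu1, hres⟩ := hE (ε ^ 2) (by positivity)
  refine ⟨u, hu, hus, hu1, ?_⟩
  calc l2Norm (schrodingerResidual W E u) < √(ε ^ 2) := Real.sqrt_lt_sqrt (by positivity) hres
    _ = 0 + ε := by rw [Real.sqrt_sq hε.le, zero_add]

lemma iInter_schrodingerPseudospectrum_subset (W : ℝ → ℝ) :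
    ⋂ n : ℕ, schrodingerPseudospectrum W (1 / (n + 1)) ⊆ schrodingerSpectrum W := by
  intro E hE ε hε
  obtain ⟨n, hn⟩ := exists_nat_one_div_lt (half_pos (Real.sqrt_pos.mpr hε))
  obtain ⟨u, hu, hus, hu1, hres⟩ := mem_iInter.mp hE n (√ε / 2) (half_pos (Real.sqrt_pos.mpr hε))
  refine ⟨u, hu, hus, hu1, ?_⟩
  have hlt : l2Norm (schrodingerResidual W E u) < √ε := by linarith
  have hnonneg : 0 ≤ ∫ x, ‖schrodingerResidual W E u x‖ ^ 2 := by positivity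
  rwa [l2Norm, Real.sqrt_lt_sqrt_iff hnonneg] at hlt

lemma isClosed_schrodingerPseudospectrum (hW : Continuous W) (η : ℝ) :
    IsClosed (schrodingerPseudospectrum W η) := by
  refine isClosed_of_closure_subset fun E hE ε hε => ?_
  obtain ⟨E', hE', hdist⟩ := Metric.mem_closure_iff.mp hE (ε / 2) (half_pos hε)
  have hM : ∀ x, |(W x - E) - (W x - E')| ≤ ε / 2 := fun x => by
    rw [sub_sub_sub_cancel_left, abs_sub_comm, ← Real.dist_eq]
    exact hdist.le
  obtain ⟨u, hu, hus, hu1, hres⟩ :=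
    mem_schrodingerPseudospectrum_of_abs_sub_le hW hW hM hE' (ε / 2) (half_pos hε)
  exact ⟨u, hu, hus, hu1, by linarith⟩

end Pseudospectrum

lemma exists_measure_schrodingerPseudospectrum_inter_lt {W : ℝ → ℝ} (hW : Continuous W)
    {s : Set ℝ} (hs : MeasurableSet s) (hs' : volume s ≠ ∞) {c : ℝ≥0∞}
    (h : volume (schrodingerSpectrum W ∩ s) < c) :
    ∃ η > 0, volume (schrodingerPseudospectrum W η ∩ s) < c := by
  set A : ℕ → Set ℝ := fun n => schrodingerPseudospectrum W (1 / (n + 1)) ∩ s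
  have hmeas : ∀ n, NullMeasurableSet (A n) volume := fun n =>
    ((isClosed_schrodingerPseudospectrum hW _).measurableSet.inter hs).nullMeasurableSet
  have hanti : Antitone A := fun n m hnm =>
    inter_subset_inter_left _ (schrodingerPseudospectrum_mono W (Nat.one_div_le_one_div hnm))
  have hfin : ∃ n, volume (A n) ≠ ∞ := ⟨0, measure_ne_top_of_subset inter_subset_right hs'⟩
  have hsub : ⋂ n, A n ⊆ schrodingerSpectrum W ∩ s := by
    rw [← iInter_inter]
    exact inter_subset_inter_left _ (iInter_schrodingerPseudospectrum_subset W)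
  obtain ⟨n, hn⟩ := ((tendsto_measure_iInter_atTop hmeas hanti hfin).eventually_lt_const
    ((measure_mono hsub).trans_lt h)).exists
  exact ⟨1 / (n + 1), by positivity, hn⟩

lemma eventually_measure_schrodingerSpectrum_inter_lt (W : ℝ →ᵇ ℝ) {s : Set ℝ}
    (hs : MeasurableSet s) (hs' : volume s ≠ ∞) {c : ℝ≥0∞}
    (h : volume (schrodingerSpectrum W ∩ s) < c) :
    ∀ᶠ W' : ℝ →ᵇ ℝ in 𝓝 W, volume (schrodingerSpectrum W' ∩ s) < c := by
  obtain ⟨η, hη, hA⟩ := exists_measure_schrodingerPseudospectrum_inter_lt W.continuous hs hs' h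
  refine Metric.eventually_nhds_iff.mpr ⟨η, hη, fun {W'} hW' => ?_⟩
  have hsub : schrodingerSpectrum W' ⊆ schrodingerPseudospectrum W η := fun E hE => by
    have hM : ∀ x, |(W x - E) - (W' x - E)| ≤ η := fun x => by
      rw [sub_sub_sub_cancel_right, abs_sub_comm, ← Real.dist_eq]
      exact (dist_coe_le_dist x).trans hW'.le
    simpa only [zero_add] using mem_schrodingerPseudospectrum_of_abs_sub_le W.continuous
      W'.continuous hM (schrodingerSpectrum_subset_pseudospectrum_zero W' hE)
  exact (measure_mono (inter_subset_inter_left _ hsub)).trans_lt hA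

theorem small_spectrum_is_stable_general
    (R δ Λ lam : ℝ)
    (V : ℝ →ᵇ ℝ)
    (hsmall : volume (schrodingerSpectrum (fun x => lam * V x) ∩ Set.Icc (-R) R)
      < ENNReal.ofReal δ) :
    ∃ τ : ℝ, 0 < τ ∧ ∃ r : ℝ, 0 < r ∧
      ∀ lam' ∈ Set.Icc Λ⁻¹ Λ, |lam - lam'| < τ →
        ∀ V' : ℝ →ᵇ ℝ, V' ∈ LP → ‖V - V'‖ < r →
          volume (schrodingerSpectrum (fun x => lam' * V' x) ∩ Set.Icc (-R) R)
            < ENNReal.ofReal δ := by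
  have hnear : ∀ᶠ p : ℝ × (ℝ →ᵇ ℝ) in 𝓝 (lam, V),
      volume (schrodingerSpectrum ⇑(p.1 • p.2) ∩ Icc (-R) R) < ENNReal.ofReal δ :=
    (continuous_smul.tendsto (lam, V)).eventually
      (eventually_measure_schrodingerSpectrum_inter_lt (lam • V) measurableSet_Icc
        measure_Icc_lt_top.ne (by simpa only [coe_smul, smul_eq_mul] using hsmall))
  obtain ⟨ε, hε, hball⟩ := Metric.eventually_nhds_iff.mp hnear
  refine ⟨ε, hε, ε, hε, fun lam' _ hlam' V' _ hV' => ?_⟩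
  have hdist : dist (lam', V') (lam, V) < ε := by
    rw [Prod.dist_eq, max_lt_iff, Real.dist_eq, abs_sub_comm, dist_comm, dist_eq_norm]
    exact ⟨hlam', hV'⟩
  simpa only [coe_smul, smul_eq_mul] using hball hdist

/-- Let `R, δ > 0`, `Λ > 1`, `λ ∈ [Λ⁻¹, Λ]`, and `V ∈ LP` with
`Leb(σ(H_{λV}) ∩ [-R,R]) < δ`. Then there are `τ, r > 0` such that
`Leb(σ(H_{λ'V'}) ∩ [-R,R]) < δ` whenever `λ' ∈ [Λ⁻¹, Λ]` with `|λ - λ'| < τ` and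
`V' ∈ LP` with `‖V - V'‖_∞ < r`. -/
theorem small_spectrum_is_stable
    (R δ Λ lam : ℝ) (hR : 0 < R) (hδ : 0 < δ) (hΛ : 1 < Λ) (hlam : lam ∈ Set.Icc Λ⁻¹ Λ)
    (V : ℝ →ᵇ ℝ) (hV : V ∈ LP)
    (hsmall : volume (schrodingerSpectrum (fun x => lam * V x) ∩ Set.Icc (-R) R)
      < ENNReal.ofReal δ) :
    ∃ τ : ℝ, 0 < τ ∧ ∃ r : ℝ, 0 < r ∧
      ∀ lam' ∈ Set.Icc Λ⁻¹ Λ, |lam - lam'| < τ →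
        ∀ V' : ℝ →ᵇ ℝ, V' ∈ LP → ‖V - V'‖ < r →
          volume (schrodingerSpectrum (fun x => lam' * V' x) ∩ Set.Icc (-R) R)
            < ENNReal.ofReal δ :=
  small_spectrum_is_stable_general R δ Λ lam V hsmall
end
end

section
/- Suppose (V_n)_{n≥2} is a sequence of continuous periodic potentials, where V_n is T_n-periodic with T_n → ∞ and T_n ≥ 1, and V : ℝ → ℝ is a bounded continuous function with ‖V_n - V‖_∞ < n^{-T_n} for all n ≥ 2. Then for every λ > 0, the function λV is a Gordon potential; that is, there exist T_k → ∞ such that lim_{k→∞} C^{T_k} max_{|x| ≤ T_k} |λV(x) - λV(x+T_k)| = 0 for every C > 0. -/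
open MeasureTheory Filter Set BoundedContinuousFunction
open scoped ENNReal

noncomputable section
/-- If `(V_n)_{n ≥ 2}` are continuous `T_n`-periodic potentials with
`T_n → ∞`, `T_n ≥ 1`, and `‖V_n - V‖_∞ < n^{-T_n}` for a bounded continuous `V`, then `λV`
is a Gordon potential for every `λ > 0`. -/
theorem gordon_of_rapid_periodic_approx
    (V : ℕ → ℝ → ℝ) (T : ℕ → ℝ) (W : ℝ → ℝ)
    (hVc : ∀ n, Continuous (V n)) (hper : ∀ n, Function.Periodic (V n) (T n))
    (hT : Tendsto T atTop atTop) (hT1 : ∀ n, 1 ≤ T n)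
    (hWc : Continuous W) (hWbd : ∃ M : ℝ, ∀ x, |W x| ≤ M)
    (happrox : ∀ n : ℕ, 2 ≤ n → (⨆ x : ℝ, |V n x - W x|) < (n : ℝ) ^ (-(T n))) :
    ∀ lam : ℝ, 0 < lam → IsGordon (fun x => lam * W x) := by
  intro lam hlam
  obtain ⟨M, hM⟩ := hWbd
  refine ⟨fun k => T (k + 2), hT.comp (tendsto_add_atTop_nat 2), ?_⟩
  intro C hC
  -- key pointwise bound on the Gordon supremum
  have key : ∀ n : ℕ, 2 ≤ n →
      gordonSup (fun x => lam * W x) (T n) ≤ 2 * lam * (n : ℝ) ^ (-(T n)) := by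
    intro n hn
    have hTpos : (0 : ℝ) < T n := lt_of_lt_of_le one_pos (hT1 n)
    obtain ⟨M', hM'⟩ := (isCompact_Icc : IsCompact (Icc (0 : ℝ) (T n))).exists_bound_of_continuousOn
      ((hVc n).continuousOn)
    have hbdd : BddAbove (Set.range fun x => |V n x - W x|) := by
      refine ⟨M' + M, ?_⟩
      rintro _ ⟨x, rfl⟩
      obtain ⟨y, hy, hxy⟩ := (hper n).exists_mem_Ico₀ hTpos x
      calc |V n x - W x| ≤ |V n x| + |W x| := abs_sub _ _
        _ ≤ M' + M := by
            refine add_le_add ?_ (hM x)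
            rw [hxy]
            simpa using hM' y (Ico_subset_Icc_self hy)
    have hpt : ∀ x, |V n x - W x| < (n : ℝ) ^ (-(T n)) := fun x =>
      lt_of_le_of_lt (le_ciSup hbdd x) (happrox n hn)
    have hnonneg : (0 : ℝ) ≤ 2 * lam * (n : ℝ) ^ (-(T n)) := by positivity
    refine Real.iSup_le ?_ hnonneg
    rintro ⟨x, hx⟩
    have h1 := hpt x
    have h2 := hpt (x + T n)
    have hVper : V n (x + T n) = V n x := hper n x
    have habs : |W x - W (x + T n)| ≤ 2 * (n : ℝ) ^ (-(T n)) := by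
      have : W x - W (x + T n) = (W x - V n x) + (V n (x + T n) - W (x + T n)) := by
        rw [hVper]; ring
      rw [this]
      calc |(W x - V n x) + (V n (x + T n) - W (x + T n))|
          ≤ |W x - V n x| + |V n (x + T n) - W (x + T n)| := abs_add_le _ _
        _ ≤ (n : ℝ) ^ (-(T n)) + (n : ℝ) ^ (-(T n)) := by
            rw [abs_sub_comm (W x)]
            exact add_le_add h1.le h2.le
        _ = 2 * (n : ℝ) ^ (-(T n)) := by ring
    calc |lam * W x - lam * W (x + T n)| = lam * |W x - W (x + T n)| := by
          rw [← mul_sub, abs_mul, abs_of_pos hlam]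
      _ ≤ lam * (2 * (n : ℝ) ^ (-(T n))) := by
          exact mul_le_mul_of_nonneg_left habs hlam.le
      _ = 2 * lam * (n : ℝ) ^ (-(T n)) := by ring
  -- squeeze
  have hg0 : Tendsto (fun k => 2 * lam * (1 / 2 : ℝ) ^ (T (k + 2))) atTop (nhds 0) := by
    have := (tendsto_rpow_atTop_of_base_lt_one (1 / 2 : ℝ) (by norm_num) (by norm_num)).comp
      (hT.comp (tendsto_add_atTop_nat 2))
    simpa using (tendsto_const_nhds (x := 2 * lam)).mul this
  refine squeeze_zero' ?_ ?_ hg0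
  · filter_upwards with k
    have h1 : (0 : ℝ) ≤ C ^ (T (k + 2)) := Real.rpow_nonneg hC.le _
    have h2 : (0 : ℝ) ≤ gordonSup (fun x => lam * W x) (T (k + 2)) :=
      Real.iSup_nonneg fun _ => abs_nonneg _
    positivity
  · filter_upwards [eventually_ge_atTop (Nat.ceil (2 * C))] with k hk
    set n := k + 2 with hndef
    have hn2 : 2 ≤ n := by omega
    have hnC : 2 * C ≤ (n : ℝ) := by
      calc 2 * C ≤ (Nat.ceil (2 * C) : ℝ) := Nat.le_ceil _
        _ ≤ (k : ℝ) := by exact_mod_cast hk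
        _ ≤ (n : ℝ) := by exact_mod_cast Nat.le_add_right k 2
    have hnpos : (0 : ℝ) < n := by positivity
    have hq : C / (n : ℝ) ≤ 1 / 2 := by
      rw [div_le_div_iff₀ hnpos (by norm_num)]
      linarith
    have step1 : C ^ (T n) * gordonSup (fun x => lam * W x) (T n)
        ≤ C ^ (T n) * (2 * lam * (n : ℝ) ^ (-(T n))) :=
      mul_le_mul_of_nonneg_left (key n hn2) (Real.rpow_nonneg hC.le _)
    have step2 : C ^ (T n) * (2 * lam * (n : ℝ) ^ (-(T n)))
        = 2 * lam * (C / (n : ℝ)) ^ (T n) := by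
      rw [Real.div_rpow hC.le hnpos.le, Real.rpow_neg hnpos.le]
      field_simp
    have step3 : (C / (n : ℝ)) ^ (T n) ≤ (1 / 2 : ℝ) ^ (T n) :=
      Real.rpow_le_rpow (by positivity) hq (le_trans zero_le_one (hT1 n))
    calc C ^ (T n) * gordonSup (fun x => lam * W x) (T n)
        ≤ 2 * lam * (C / (n : ℝ)) ^ (T n) := by rw [← step2]; exact step1
      _ ≤ 2 * lam * (1 / 2 : ℝ) ^ (T n) :=
          mul_le_mul_of_nonneg_left step3 (by positivity)
end
end
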